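/- (Existence of the Robinson cutoff.) For every L > 0 and every b with 0 < b < L/2, there exists a continuously differentiable function h : ℝ → ℝ such that: (1) h is even and 0 ≤ h ≤ 1; (2) h(x) = 0 for all |x| ≥ L/2 + b; (3) h(x) = 1 for all |x| ≤ L/2 − b; (4) h(L/2 − x)² + h(L/2 + x)² = 1 for all x ∈ [0, b]; (5) |h'(x)| ≤ 1/b for all x ∈ ℝ. -/

import Mathlib

open Real Set Filter

/-!
Write `h = cos ∘ θ`, where the angle `θ` is even, vanishes on `|x| ≤ c - b` (with `c = L/2`),
equals `π/2` on `|x| ≥ c + b`, and satisfies `θ (c - x) + θ (c + x) = π/2` on `[0, b]`. Then the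
matching condition is `sin² + cos² = 1` and `|h'| = |sin θ| |θ'| ≤ |θ'|`. Such a `θ` is a
rescaled `C¹` step from `0` to `π/2` across `[-1, 1]` whose slope stays below `1`.
-/

theorem hasDerivAt_ite_le {f g f' g' : ℝ → ℝ} {a : ℝ}
    (hf : ∀ x, HasDerivAt f (f' x) x) (hg : ∀ x, HasDerivAt g (g' x) x)
    (hfg : f a = g a) (hfg' : f' a = g' a) (x : ℝ) :
    HasDerivAt (fun y => if y ≤ a then f y else g y) (if x ≤ a then f' x else g' x) x := by
  rcases lt_trichotomy x a with hx | rfl | hx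
  · rw [if_pos hx.le]
    refine (hf x).congr_of_eventuallyEq ?_
    filter_upwards [Iio_mem_nhds hx] with y hy
    exact if_pos (le_of_lt hy)
  · rw [if_pos le_rfl]
    have hleft : HasDerivWithinAt (fun y => if y ≤ x then f y else g y) (f' x) (Iic x) x :=
      (hf x).hasDerivWithinAt.congr (fun y hy => if_pos hy) (if_pos le_rfl)
    have hright : HasDerivWithinAt (fun y => if y ≤ x then f y else g y) (f' x) (Ici x) x := by
      rw [hfg']
      refine (hg x).hasDerivWithinAt.congr (fun y hy => ?_) (by simp [hfg])
      rcases (show x ≤ y from hy).eq_or_lt with rfl | hy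
      · simp [hfg]
      · exact if_neg (not_le.2 hy)
    simpa [Iic_union_Ici] using hleft.union hright
  · rw [if_neg (not_le.2 hx)]
    refine (hg x).congr_of_eventuallyEq ?_
    filter_upwards [Ioi_mem_nhds hx] with y hy
    exact if_neg (not_le.2 hy)

theorem hasDerivAt_comp_max {f f' : ℝ → ℝ} {a : ℝ} (hf : ∀ x, HasDerivAt f (f' x) x)
    (ha : f' a = 0) (x : ℝ) : HasDerivAt (fun y => f (max a y)) (f' (max a x)) x := by
  convert hasDerivAt_ite_le (fun _ => hasDerivAt_const _ (f a)) hf rfl ha.symm x using 1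
  · funext y
    split_ifs with hy
    · rw [max_eq_left hy]
    · rw [max_eq_right (le_of_not_ge hy)]
  · split_ifs with hx
    · rw [max_eq_left hx, ha]
    · rw [max_eq_right (le_of_not_ge hx)]

theorem hasDerivAt_comp_min {f f' : ℝ → ℝ} {b : ℝ} (hf : ∀ x, HasDerivAt f (f' x) x)
    (hb : f' b = 0) (x : ℝ) : HasDerivAt (fun y => f (min b y)) (f' (min b x)) x := by
  convert hasDerivAt_ite_le hf (fun _ => hasDerivAt_const _ (f b)) rfl hb x using 1
  · funext y
    split_ifs with hy
    · rw [min_eq_right hy]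
    · rw [min_eq_left (le_of_not_ge hy)]
  · split_ifs with hx
    · rw [min_eq_right hx]
    · rw [min_eq_left (le_of_not_ge hx), hb]

theorem hasDerivAt_comp_clamp {f f' : ℝ → ℝ} {a b : ℝ} (hab : a ≤ b)
    (hf : ∀ x, HasDerivAt f (f' x) x) (ha : f' a = 0) (hb : f' b = 0) (x : ℝ) :
    HasDerivAt (fun y => f (max a (min b y))) (f' (max a (min b x))) x :=
  hasDerivAt_comp_min (f := fun z => f (max a z)) (hasDerivAt_comp_max hf ha)
    (by rwa [max_eq_right hab]) x

/- `π/4 (1 + p)` for the odd quintic `p` with `p (±1) = ±1`, `p' (±1) = 0`, so that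
`p' u = 15/16 (1 - u²) (1 + 3u²)` and the slope is at most `5π/16 < 1`; the cubic `(3u - u³)/2`
would only give `3π/8 > 1`. -/
noncomputable def smoothStepPoly (u : ℝ) : ℝ := π / 4 * (1 + (15 * u + 10 * u ^ 3 - 9 * u ^ 5) / 16)

noncomputable def smoothStepPolyDeriv (u : ℝ) : ℝ := 15 * π / 64 * ((1 - u ^ 2) * (1 + 3 * u ^ 2))

theorem hasDerivAt_smoothStepPoly (u : ℝ) :
    HasDerivAt smoothStepPoly (smoothStepPolyDeriv u) u := by
  have h := ((((hasDerivAt_id' u).const_mul 15).add ((hasDerivAt_pow 3 u).const_mul 10)).sub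
    ((hasDerivAt_pow 5 u).const_mul 9)).div_const 16 |>.const_add 1 |>.const_mul (π / 4)
  exact h.congr_deriv (by simp only [smoothStepPolyDeriv]; ring)

theorem smoothStepPolyDeriv_mem_Icc {u : ℝ} (hu : u ∈ Icc (-1) 1) :
    smoothStepPolyDeriv u ∈ Icc 0 1 := by
  have hu2 : u ^ 2 ≤ 1 := by nlinarith [hu.1, hu.2]
  have hpoly : (1 - u ^ 2) * (1 + 3 * u ^ 2) ≤ 4 / 3 := by nlinarith [sq_nonneg (3 * u ^ 2 - 1)]
  have hpos : 0 ≤ (1 - u ^ 2) * (1 + 3 * u ^ 2) := mul_nonneg (by linarith) (by positivity)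
  have := pi_pos
  unfold smoothStepPolyDeriv
  exact ⟨by positivity, by nlinarith [pi_lt_d2]⟩

noncomputable def smoothStep (u : ℝ) : ℝ := smoothStepPoly (max (-1) (min 1 u))

theorem hasDerivAt_smoothStep (u : ℝ) :
    HasDerivAt smoothStep (smoothStepPolyDeriv (max (-1) (min 1 u))) u :=
  hasDerivAt_comp_clamp (by norm_num) hasDerivAt_smoothStepPoly
    (by norm_num [smoothStepPolyDeriv]) (by norm_num [smoothStepPolyDeriv]) u

theorem deriv_smoothStep_mem_Icc (u : ℝ) : deriv smoothStep u ∈ Icc 0 1 := by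
  rw [(hasDerivAt_smoothStep u).deriv]
  exact smoothStepPolyDeriv_mem_Icc (projIcc (-1) 1 (by norm_num) u).2

theorem deriv_smoothStep_of_le {u : ℝ} (hu : u ≤ -1) : deriv smoothStep u = 0 := by
  rw [(hasDerivAt_smoothStep u).deriv, min_eq_right (hu.trans (by norm_num)), max_eq_left hu]
  norm_num [smoothStepPolyDeriv]

theorem contDiff_smoothStep : ContDiff ℝ 1 smoothStep := by
  refine contDiff_one_iff_deriv.2 ⟨fun u => (hasDerivAt_smoothStep u).differentiableAt, ?_⟩
  rw [show deriv smoothStep = _ from funext fun u => (hasDerivAt_smoothStep u).deriv]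
  unfold smoothStepPolyDeriv
  fun_prop

theorem smoothStep_of_le {u : ℝ} (hu : u ≤ -1) : smoothStep u = 0 := by
  rw [smoothStep, min_eq_right (hu.trans (by norm_num)), max_eq_left hu]
  norm_num [smoothStepPoly]

theorem smoothStep_add_smoothStep_neg (u : ℝ) : smoothStep u + smoothStep (-u) = π / 2 := by
  have hclamp : max (-1) (min 1 (-u)) = -max (-1) (min 1 u) := by
    simp only [max_def, min_def]
    split_ifs <;> linarith
  rw [smoothStep, smoothStep, hclamp, smoothStepPoly, smoothStepPoly]
  ring

theorem smoothStep_of_one_le {u : ℝ} (hu : 1 ≤ u) : smoothStep u = π / 2 := by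
  have := smoothStep_add_smoothStep_neg u
  rw [smoothStep_of_le (neg_le_neg hu)] at this
  linarith

theorem smoothStep_mem_Icc (u : ℝ) : smoothStep u ∈ Icc 0 (π / 2) := by
  have hmono : Monotone smoothStep :=
    monotone_of_deriv_nonneg contDiff_smoothStep.differentiable_one
      fun u => (deriv_smoothStep_mem_Icc u).1
  exact ⟨(smoothStep_of_le (min_le_left _ _)).symm.le.trans (hmono (min_le_right _ u)),
    (hmono (le_max_left u 1)).trans (smoothStep_of_one_le (le_max_right _ _)).le⟩

noncomputable def robinsonAngle (c b x : ℝ) : ℝ :=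
  smoothStep ((x - c) / b) + smoothStep ((-x - c) / b)

noncomputable def robinsonCutoff (c b x : ℝ) : ℝ := cos (robinsonAngle c b x)

section

variable {c b : ℝ}

theorem robinsonAngle_neg (x : ℝ) : robinsonAngle c b (-x) = robinsonAngle c b x := by
  rw [robinsonAngle, robinsonAngle, neg_neg, add_comm]

theorem contDiff_robinsonAngle : ContDiff ℝ 1 (robinsonAngle c b) := by
  unfold robinsonAngle
  have := contDiff_smoothStep
  fun_prop

theorem hasDerivAt_robinsonAngle (x : ℝ) :
    HasDerivAt (robinsonAngle c b)
      ((deriv smoothStep ((x - c) / b) - deriv smoothStep ((-x - c) / b)) / b) x := by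
  have hd := contDiff_smoothStep.differentiable_one
  have h₁ := (hd _).hasDerivAt.comp x (((hasDerivAt_id' x).sub_const c).div_const b)
  have h₂ := (hd _).hasDerivAt.comp x (((hasDerivAt_neg x).sub_const c).div_const b)
  exact (h₁.add h₂).congr_deriv (by ring)

theorem robinsonAngle_eq_smoothStep_abs (hb : 0 < b) (hbc : b ≤ c) (x : ℝ) :
    robinsonAngle c b x = smoothStep ((|x| - c) / b) := by
  have hoff : ∀ y, 0 ≤ y → smoothStep ((-y - c) / b) = 0 := fun y hy =>
    smoothStep_of_le (by rw [div_le_iff₀ hb]; linarith)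
  rcases le_total 0 x with hx | hx
  · rw [robinsonAngle, hoff x hx, add_zero, abs_of_nonneg hx]
  · rw [← robinsonAngle_neg, robinsonAngle, hoff (-x) (by linarith), add_zero, abs_of_nonpos hx]

theorem abs_deriv_robinsonAngle_le (hb : 0 < b) (hbc : b ≤ c) (x : ℝ) :
    |deriv (robinsonAngle c b) x| ≤ 1 / b := by
  have hone : ∀ y, 0 ≤ y → |deriv smoothStep ((y - c) / b) - deriv smoothStep ((-y - c) / b)| ≤ 1 :=
    fun y hy => by
      rw [deriv_smoothStep_of_le (u := (-y - c) / b) (by rw [div_le_iff₀ hb]; linarith), sub_zero,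
        abs_of_nonneg (deriv_smoothStep_mem_Icc _).1]
      exact (deriv_smoothStep_mem_Icc _).2
  rw [(hasDerivAt_robinsonAngle x).deriv, abs_div, abs_of_pos hb]
  gcongr
  rcases le_total 0 x with hx | hx
  · exact hone x hx
  · rw [abs_sub_comm]
    simpa using hone (-x) (by linarith)

theorem contDiff_robinsonCutoff : ContDiff ℝ 1 (robinsonCutoff c b) :=
  contDiff_cos.comp contDiff_robinsonAngle

theorem robinsonCutoff_neg (x : ℝ) : robinsonCutoff c b (-x) = robinsonCutoff c b x := by
  rw [robinsonCutoff, robinsonCutoff, robinsonAngle_neg]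

theorem robinsonCutoff_mem_Icc (hb : 0 < b) (hbc : b ≤ c) (x : ℝ) :
    robinsonCutoff c b x ∈ Icc 0 1 := by
  have hθ := smoothStep_mem_Icc ((|x| - c) / b)
  rw [robinsonCutoff, robinsonAngle_eq_smoothStep_abs hb hbc]
  exact ⟨cos_nonneg_of_mem_Icc ⟨by linarith [pi_pos, hθ.1], hθ.2⟩, cos_le_one _⟩

theorem robinsonCutoff_eq_zero (hb : 0 < b) (hbc : b ≤ c) {x : ℝ} (hx : c + b ≤ |x|) :
    robinsonCutoff c b x = 0 := by
  rw [robinsonCutoff, robinsonAngle_eq_smoothStep_abs hb hbc,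
    smoothStep_of_one_le (by rw [le_div_iff₀ hb]; linarith), cos_pi_div_two]

theorem robinsonCutoff_eq_one (hb : 0 < b) (hbc : b ≤ c) {x : ℝ} (hx : |x| ≤ c - b) :
    robinsonCutoff c b x = 1 := by
  rw [robinsonCutoff, robinsonAngle_eq_smoothStep_abs hb hbc,
    smoothStep_of_le (by rw [div_le_iff₀ hb]; linarith), cos_zero]

theorem robinsonCutoff_sub_sq_add_add_sq (hb : 0 < b) (hbc : b ≤ c) {x : ℝ} (hx : x ∈ Icc 0 b) :
    robinsonCutoff c b (c - x) ^ 2 + robinsonCutoff c b (c + x) ^ 2 = 1 := by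
  have hx' : 0 ≤ c - x := by linarith [hx.2]
  have hrefl : smoothStep (-(x / b)) = π / 2 - smoothStep (x / b) := by
    linarith [smoothStep_add_smoothStep_neg (x / b)]
  rw [robinsonCutoff, robinsonCutoff, robinsonAngle_eq_smoothStep_abs hb hbc,
    robinsonAngle_eq_smoothStep_abs hb hbc, abs_of_nonneg hx', abs_of_nonneg (by linarith [hx.1]),
    show (c - x - c) / b = -(x / b) by ring, show (c + x - c) / b = x / b by ring,
    hrefl, cos_pi_div_two_sub, sin_sq_add_cos_sq]

theorem abs_deriv_robinsonCutoff_le (hb : 0 < b) (hbc : b ≤ c) (x : ℝ) :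
    |deriv (robinsonCutoff c b) x| ≤ 1 / b := by
  have hd := (hasDerivAt_robinsonAngle (c := c) (b := b) x).cos
  rw [show robinsonCutoff c b = fun y => cos (robinsonAngle c b y) from rfl, hd.deriv,
    ← (hasDerivAt_robinsonAngle x).deriv, abs_mul, abs_neg]
  calc |sin (robinsonAngle c b x)| * |deriv (robinsonAngle c b) x|
      ≤ 1 * (1 / b) := by
        gcongr
        exacts [abs_sin_le_one _, abs_deriv_robinsonAngle_le hb hbc x]
    _ = 1 / b := one_mul _

end

theorem statement_17 (L b : ℝ) (hb : 0 < b) (hbL : b < L / 2) :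
    ∃ h : ℝ → ℝ,
      ContDiff ℝ 1 h ∧
      (∀ x, h (-x) = h x) ∧
      (∀ x, 0 ≤ h x ∧ h x ≤ 1) ∧
      (∀ x, L / 2 + b ≤ |x| → h x = 0) ∧
      (∀ x, |x| ≤ L / 2 - b → h x = 1) ∧
      (∀ x ∈ Set.Icc (0 : ℝ) b, (h (L / 2 - x)) ^ 2 + (h (L / 2 + x)) ^ 2 = 1) ∧
      (∀ x, |deriv h x| ≤ 1 / b) :=
  ⟨robinsonCutoff (L / 2) b, contDiff_robinsonCutoff, robinsonCutoff_neg,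
    robinsonCutoff_mem_Icc hb hbL.le, fun _ => robinsonCutoff_eq_zero hb hbL.le,
    fun _ => robinsonCutoff_eq_one hb hbL.le, fun _ => robinsonCutoff_sub_sq_add_add_sq hb hbL.le,
    abs_deriv_robinsonCutoff_le hb hbL.le⟩
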